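/- Let n be a positive natural number, α > 0, λ ∈ ℝ, and set λ' = λ/α. Let s : Fin n → ℝ with s i > 0 for all i, and let M be the diagonal linear map on EuclideanSpace ℝ (Fin n) with (M θ) i = (θ i)/(s i). Let f : EuclideanSpace ℝ (Fin n) → ℝ be differentiable, and define the scale-adjusted regularized loss f_sreg(θ) = f(θ) + (λ'/(2α))·α·∑_i s i·(θ i)² — equivalently f_sreg(θ) = f(θ) + (λ'/2)·‖θ ⊙ √s‖². Then for every θ, the preconditioned gradient step on f_sreg without weight decay equals the preconditioned gradient step on f with decoupled weight decay λ: θ − α·M(∇f_sreg(θ)) = (1 − λ)·θ − α·M(∇f(θ)). -/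

import Mathlib

/-! The scale-adjusted regularizer `(λ'/2) ∑ sᵢ θᵢ²` has gradient `λ' · sθ`, and the diagonal
preconditioner `diag(s)⁻¹` maps `sθ` back to `θ`. So the step on `f_sreg` differs from the step
on `f` by exactly `α λ' θ = λ θ`, which is decoupled weight decay. -/

section Gradient

variable {F : Type*} [NormedAddCommGroup F] [InnerProductSpace ℝ F] [CompleteSpace F]
  {f g : F → ℝ} {f' g' x : F}

theorem HasGradientAt.add (hf : HasGradientAt f f' x) (hg : HasGradientAt g g' x) :
    HasGradientAt (fun y => f y + g y) (f' + g') x := by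
  rw [hasGradientAt_iff_hasFDerivAt] at *
  simpa only [map_add] using hf.fun_add hg

theorem HasGradientAt.const_mul (c : ℝ) (hf : HasGradientAt f f' x) :
    HasGradientAt (fun y => c * f y) (c • f') x := by
  rw [hasGradientAt_iff_hasFDerivAt] at *
  simpa only [map_smulₛₗ, conj_trivial] using hf.const_mul c

end Gradient

namespace EuclideanSpace

variable {ι : Type*}

theorem hasGradientAt_sum_mul_sq [Fintype ι] (s : ι → ℝ) (θ : EuclideanSpace ℝ ι) :
    HasGradientAt (fun θ : EuclideanSpace ℝ ι => ∑ i, s i * θ i ^ 2)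
      ((2 : ℝ) • WithLp.toLp 2 fun i => s i * θ i) θ := by
  rw [hasGradientAt_iff_hasFDerivAt]
  refine (HasFDerivAt.fun_sum fun i _ =>
    ((proj i : EuclideanSpace ℝ ι →L[ℝ] ℝ).hasFDerivAt.pow 2).const_mul (s i)).congr_fderiv ?_
  ext w
  simp only [PiLp.proj_apply, Nat.add_one_sub_one, pow_one, nsmul_eq_mul, Nat.cast_ofNat,
    sum_apply, smul_apply, smul_eq_mul, map_smul, InnerProductSpace.toDual_apply_apply,
    PiLp.inner_apply, RCLike.inner_apply, Real.ringHom_apply, Finset.mul_sum]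
  exact Finset.sum_congr rfl fun i _ => by ring

theorem apply_toLp_mul_eq_self {s : ι → ℝ} (hs : ∀ i, s i ≠ 0)
    {M : EuclideanSpace ℝ ι → EuclideanSpace ℝ ι} (hM : ∀ θ i, M θ i = θ i / s i)
    (θ : EuclideanSpace ℝ ι) : M (WithLp.toLp 2 fun i => s i * θ i) = θ := by
  ext i
  rw [hM]
  exact mul_div_cancel_left₀ _ (hs i)

end EuclideanSpace

theorem preconditioned_step_sreg_eq_weight_decay_step_general
    (n : ℕ) (α lam : ℝ) (hα : 0 < α)
    (s : Fin n → ℝ) (hs : ∀ i, 0 < s i)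
    (M : EuclideanSpace ℝ (Fin n) →ₗ[ℝ] EuclideanSpace ℝ (Fin n))
    (hM : ∀ (θ : EuclideanSpace ℝ (Fin n)) (i : Fin n), M θ i = θ i / s i)
    (f : EuclideanSpace ℝ (Fin n) → ℝ) (hf : Differentiable ℝ f)
    (fsreg : EuclideanSpace ℝ (Fin n) → ℝ)
    (hfsreg : ∀ θ : EuclideanSpace ℝ (Fin n),
      fsreg θ = f θ + ((lam / α) / 2) * ∑ i, s i * (θ i) ^ 2)
    (θ : EuclideanSpace ℝ (Fin n)) :
    θ - α • M (gradient fsreg θ) = (1 - lam) • θ - α • M (gradient f θ) := by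
  have hgrad : gradient fsreg θ =
      gradient f θ + (lam / α / 2) • (2 : ℝ) • WithLp.toLp 2 fun i => s i * θ i := by
    rw [show fsreg = _ from funext hfsreg]
    exact ((hf θ).hasGradientAt.add
      ((EuclideanSpace.hasGradientAt_sum_mul_sq s θ).const_mul _)).gradient
  rw [hgrad, map_add, map_smul, map_smul,
    EuclideanSpace.apply_toLp_mul_eq_self (fun i => (hs i).ne') hM]
  have hscale : α * (lam / α / 2 * 2) = lam := by field_simp
  linear_combination (norm := module) (-hscale) • θ

/-- Proposition 3 (single step): with a fixed diagonal preconditioner `M = diag(s)⁻¹`, the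
preconditioned gradient step on the scale-adjusted regularized loss
`f_sreg θ = f θ + (λ'/2)·∑ i, s i·(θ i)²` with `λ' = λ/α` (without weight decay) equals the
preconditioned gradient step on `f` with decoupled weight decay `λ`. -/
theorem preconditioned_step_sreg_eq_weight_decay_step
    (n : ℕ) (hn : 0 < n) (α lam : ℝ) (hα : 0 < α)
    (s : Fin n → ℝ) (hs : ∀ i, 0 < s i)
    (M : EuclideanSpace ℝ (Fin n) →ₗ[ℝ] EuclideanSpace ℝ (Fin n))
    (hM : ∀ (θ : EuclideanSpace ℝ (Fin n)) (i : Fin n), M θ i = θ i / s i)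
    (f : EuclideanSpace ℝ (Fin n) → ℝ) (hf : Differentiable ℝ f)
    (fsreg : EuclideanSpace ℝ (Fin n) → ℝ)
    (hfsreg : ∀ θ : EuclideanSpace ℝ (Fin n),
      fsreg θ = f θ + ((lam / α) / 2) * ∑ i, s i * (θ i) ^ 2)
    (θ : EuclideanSpace ℝ (Fin n)) :
    θ - α • M (gradient fsreg θ) = (1 - lam) • θ - α • M (gradient f θ) :=
  preconditioned_step_sreg_eq_weight_decay_step_general n α lam hα s hs M hM f hf fsreg hfsreg θ
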